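/- Let n ≥ 3 be an integer, let h satisfy hypotheses (H), let k ≥ 1 be an integer, and suppose h(r) ≤ C2 for all 0 ≤ r ≤ R, where C2 > 0. Then σ_(k)(g_h) ≤ λ_(k) C2^{n−3} R / h(0)^{n−1}. -/

import Mathlib

/-!
Test the variational characterization with the ramp `a_ε(r) = min 1 ((R - r) / ε)`.
On `[0, R - ε]` it is constant, so only the potential term `λ a² h^{n-3} ≤ λ C2^{n-3}`
contributes. On `[R - ε, R]` we have `|a'| = 1/ε`, while `h(R) = 0` and the Lipschitz
constant `L` of `h` give `h ≤ L ε`, so the kinetic term contributes at most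
`L^{n-1} ε^{n-2} ≤ L^{n-1} ε` as `n ≥ 3`. Thus
`σ_(k) ≤ (λ C2^{n-3} R + L^{n-1} ε) / h(0)^{n-1}` for all small `ε > 0`; let `ε → 0`.
-/
open MeasureTheory Set

/-- Hypotheses (H): `h` is smooth on `[0,R]`, positive on `[0,R)`, `h(R)=0`,
`h'(R) = -1`, and all even-order derivatives of `h` vanish at `R`. -/
def SatisfiesH (R : ℝ) (h : ℝ → ℝ) : Prop :=
  ContDiffOn ℝ (⊤ : ℕ∞) h (Set.Icc 0 R) ∧
  (∀ r ∈ Set.Ico (0:ℝ) R, 0 < h r) ∧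
  h R = 0 ∧
  derivWithin h (Set.Icc 0 R) R = -1 ∧
  ∀ k : ℕ, iteratedDerivWithin (2 * k) h (Set.Icc 0 R) R = 0

/-- The `k`-th distinct eigenvalue `λ_(k) = k (n + k - 2)` of the Laplacian on the
round unit sphere `S^{n-1}`. -/
noncomputable def sphereEig (n k : ℕ) : ℝ := (k : ℝ) * ((n : ℝ) + (k : ℝ) - 2)

/-- The Rayleigh quotient
`R_λ(a; h) = (∫₀^R ((a')² h^{n-1} + λ a² h^{n-3}))/(a(0)² h(0)^{n-1})`. -/
noncomputable def rayleighQ (R : ℝ) (n : ℕ) (lam : ℝ) (h a : ℝ → ℝ) : ℝ :=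
  (∫ r in (0:ℝ)..R,
      (deriv a r) ^ 2 * h r ^ ((n : ℤ) - 1) + lam * (a r) ^ 2 * h r ^ ((n : ℤ) - 3)) /
    ((a 0) ^ 2 * h 0 ^ ((n : ℤ) - 1))

/-- Admissible test functions: Lipschitz on `[0,R]`, vanishing at `R`, nonzero at `0`. -/
def IsAdmissible (R : ℝ) (a : ℝ → ℝ) : Prop :=
  (∃ K : NNReal, LipschitzOnWith K a (Set.Icc 0 R)) ∧ a R = 0 ∧ a 0 ≠ 0

/-- The `k`-th distinct Steklov eigenvalue of the ball `[0,R] × S^{n-1}` with the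
revolution metric `g_h`, characterized variationally. -/
noncomputable def steklov (R : ℝ) (n k : ℕ) (h : ℝ → ℝ) : ℝ :=
  sInf { v : ℝ | ∃ a : ℝ → ℝ, IsAdmissible R a ∧ v = rayleighQ R n (sphereEig n k) h a }

/-- `a` is a minimizer realizing `σ_(k)(g_h)`. -/
def IsMinimizer (R : ℝ) (n k : ℕ) (h a : ℝ → ℝ) : Prop :=
  IsAdmissible R a ∧ rayleighQ R n (sphereEig n k) h a = steklov R n k h

open Filter Topology

section IntervalBounds

variable {f : ℝ → ℝ} {a b c A B C : ℝ}

lemma ae_restrict_Ioc_mem_Ioo : ∀ᵐ x ∂(volume.restrict (Ioc a b)), x ∈ Ioo a b := by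
  rw [← Measure.restrict_congr_set Ioo_ae_eq_Ioc]
  exact ae_restrict_mem measurableSet_Ioo

lemma intervalIntegrable_of_le_on_Ioo (hab : a ≤ b)
    (hf : AEStronglyMeasurable f (volume.restrict (Ioc a b)))
    (hf0 : ∀ x ∈ Ioo a b, 0 ≤ f x) (hC : ∀ x ∈ Ioo a b, f x ≤ C) :
    IntervalIntegrable f volume a b := by
  rw [intervalIntegrable_iff_integrableOn_Ioc_of_le hab]
  refine ⟨hf, .restrict_of_bounded (C := C) (by simp) ?_⟩
  filter_upwards [ae_restrict_Ioc_mem_Ioo] with x hx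
  rw [Real.norm_of_nonneg (hf0 x hx)]
  exact hC x hx

lemma integral_le_of_le_on_Ioo (hab : a ≤ b) (hf0 : ∀ x ∈ Ioo a b, 0 ≤ f x)
    (hC : ∀ x ∈ Ioo a b, f x ≤ C) : ∫ x in a..b, f x ≤ C * (b - a) := by
  have hnorm : ∀ᵐ x, x ∈ uIoc a b → ‖f x‖ ≤ C := by
    rw [← ae_restrict_iff' measurableSet_uIoc, uIoc_of_le hab]
    filter_upwards [ae_restrict_Ioc_mem_Ioo] with x hx
    rw [Real.norm_of_nonneg (hf0 x hx)]
    exact hC x hx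
  calc ∫ x in a..b, f x ≤ ‖∫ x in a..b, f x‖ := Real.le_norm_self _
    _ ≤ C * |b - a| := intervalIntegral.norm_integral_le_of_norm_le_const_ae hnorm
    _ = C * (b - a) := by rw [abs_of_nonneg (sub_nonneg.mpr hab)]

lemma integral_le_of_le_on_Ioo_of_le_on_Ioo (hac : a ≤ c) (hcb : c ≤ b)
    (hf : AEStronglyMeasurable f (volume.restrict (Ioc a b)))
    (hf0 : ∀ x ∈ Ioo a b, 0 ≤ f x) (hA : ∀ x ∈ Ioo a c, f x ≤ A)
    (hB : ∀ x ∈ Ioo c b, f x ≤ B) :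
    ∫ x in a..b, f x ≤ A * (c - a) + B * (b - c) := by
  have hf0_left : ∀ x ∈ Ioo a c, 0 ≤ f x := fun x hx => hf0 x ⟨hx.1, hx.2.trans_le hcb⟩
  have hf0_right : ∀ x ∈ Ioo c b, 0 ≤ f x := fun x hx => hf0 x ⟨hac.trans_lt hx.1, hx.2⟩
  have hint_left : IntervalIntegrable f volume a c :=
    intervalIntegrable_of_le_on_Ioo hac (hf.mono_measure (Measure.restrict_mono
      (Ioc_subset_Ioc_right hcb) le_rfl)) hf0_left hA
  have hint_right : IntervalIntegrable f volume c b :=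
    intervalIntegrable_of_le_on_Ioo hcb (hf.mono_measure (Measure.restrict_mono
      (Ioc_subset_Ioc_left hac) le_rfl)) hf0_right hB
  rw [← intervalIntegral.integral_add_adjacent_intervals hint_left hint_right]
  exact add_le_add (integral_le_of_le_on_Ioo hac hf0_left hA)
    (integral_le_of_le_on_Ioo hcb hf0_right hB)

end IntervalBounds

lemma sphereEig_nonneg {n : ℕ} (hn : 2 ≤ n) (k : ℕ) : 0 ≤ sphereEig n k := by
  have hn' : (2 : ℝ) ≤ n := by exact_mod_cast hn
  have hk : (0 : ℝ) ≤ k := k.cast_nonneg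
  exact mul_nonneg hk (by linarith)

section Rayleigh

variable {R lam : ℝ} {n : ℕ} {h a : ℝ → ℝ}

lemma rayleighQ_eq_of_three_le (hn : 3 ≤ n) :
    rayleighQ R n lam h a =
      (∫ r in (0:ℝ)..R, deriv a r ^ 2 * h r ^ (n - 1) + lam * a r ^ 2 * h r ^ (n - 3)) /
        (a 0 ^ 2 * h 0 ^ (n - 1)) := by
  have e1 : (n : ℤ) - 1 = ((n - 1 : ℕ) : ℤ) := by omega
  have e3 : (n : ℤ) - 3 = ((n - 3 : ℕ) : ℤ) := by omega
  simp only [rayleighQ, e1, e3, zpow_natCast]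

lemma rayleighQ_nonneg (hR : 0 ≤ R) (hlam : 0 ≤ lam) (hh : ∀ r ∈ Icc 0 R, 0 ≤ h r) :
    0 ≤ rayleighQ R n lam h a := by
  refine div_nonneg (intervalIntegral.integral_nonneg hR fun r hr => ?_)
    (mul_nonneg (sq_nonneg _) (zpow_nonneg (hh 0 ⟨le_rfl, hR⟩) _))
  have := hh r hr
  positivity

lemma steklov_le_rayleighQ {k : ℕ} (hR : 0 ≤ R) (hn : 2 ≤ n)
    (hh : ∀ r ∈ Icc 0 R, 0 ≤ h r) (ha : IsAdmissible R a) :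
    steklov R n k h ≤ rayleighQ R n (sphereEig n k) h a :=
  csInf_le ⟨0, by
    rintro _ ⟨b, -, rfl⟩
    exact rayleighQ_nonneg hR (sphereEig_nonneg hn k) hh⟩ ⟨a, ha, rfl⟩

end Rayleigh

noncomputable def ramp (R ε : ℝ) (r : ℝ) : ℝ := min 1 ((R - r) / ε)

section Ramp

variable {R ε r : ℝ}

lemma ramp_zero (hε : 0 < ε) (hεR : ε ≤ R) : ramp R ε 0 = 1 :=
  min_eq_left (by rw [sub_zero, le_div_iff₀ hε]; linarith)

lemma ramp_self : ramp R ε R = 0 := by simp [ramp]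

lemma ramp_le_one : ramp R ε r ≤ 1 := min_le_left _ _

lemma ramp_nonneg (hε : 0 < ε) (hr : r ≤ R) : 0 ≤ ramp R ε r :=
  le_min zero_le_one (div_nonneg (sub_nonneg.mpr hr) hε.le)

lemma lipschitzWith_ramp (hε : 0 < ε) : LipschitzWith (Real.toNNReal ε⁻¹) (ramp R ε) := by
  have hlin : LipschitzWith (Real.toNNReal ε⁻¹) fun r => (R - r) / ε := by
    refine LipschitzWith.of_dist_le_mul fun x y => ?_
    rw [Real.coe_toNNReal _ (by positivity), Real.dist_eq, Real.dist_eq, ← sub_div,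
      show R - x - (R - y) = -(x - y) by ring, abs_div, abs_neg, abs_of_pos hε, div_eq_inv_mul]
  have hmin := (LipschitzWith.const (α := ℝ) (1 : ℝ)).min hlin
  rw [max_eq_right (zero_le (α := NNReal))] at hmin
  exact hmin

lemma isAdmissible_ramp (hε : 0 < ε) (hεR : ε ≤ R) : IsAdmissible R (ramp R ε) :=
  ⟨⟨_, (lipschitzWith_ramp hε).lipschitzOnWith⟩, ramp_self, by simp [ramp_zero hε hεR]⟩

lemma deriv_ramp_of_lt (hε : 0 < ε) (hr : r < R - ε) : deriv (ramp R ε) r = 0 := by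
  have : ramp R ε =ᶠ[𝓝 r] fun _ => 1 := by
    filter_upwards [Iio_mem_nhds hr] with s hs
    exact min_eq_left (by rw [le_div_iff₀ hε]; linarith [mem_Iio.mp hs])
  rw [this.deriv_eq, deriv_const]

lemma deriv_ramp_of_gt (hε : 0 < ε) (hr : R - ε < r) : deriv (ramp R ε) r = -ε⁻¹ := by
  have : ramp R ε =ᶠ[𝓝 r] fun s => (R - s) / ε := by
    filter_upwards [Ioi_mem_nhds hr] with s hs
    exact min_eq_right (by rw [div_le_iff₀ hε]; linarith [mem_Ioi.mp hs])
  rw [this.deriv_eq, (((hasDerivAt_id' r).const_sub R).div_const ε).deriv, neg_div, one_div]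

end Ramp

lemma LipschitzOnWith.le_mul_sub_of_eq_zero {f : ℝ → ℝ} {s : Set ℝ} {K : NNReal} {x b : ℝ}
    (hf : LipschitzOnWith K f s) (hx : x ∈ s) (hb : b ∈ s) (hfb : f b = 0) (hxb : x ≤ b) :
    f x ≤ K * (b - x) := by
  have := hf.dist_le_mul x hx b hb
  rw [hfb, Real.dist_eq, Real.dist_eq, sub_zero, abs_of_nonpos (sub_nonpos.mpr hxb)] at this
  linarith [le_abs_self (f x)]

lemma inv_sq_mul_pow_le {m : ℕ} {ε x L : ℝ} (hm : 2 ≤ m) (hε : 0 < ε) (hε1 : ε ≤ 1)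
    (hL : 0 ≤ L) (hx : 0 ≤ x) (hxL : x ≤ L * ε) : ε⁻¹ ^ 2 * x ^ m ≤ L ^ m := by
  obtain ⟨j, rfl⟩ := Nat.exists_eq_add_of_le' hm
  calc ε⁻¹ ^ 2 * x ^ (j + 2) ≤ ε⁻¹ ^ 2 * (L * ε) ^ (j + 2) := by gcongr
    _ = L ^ (j + 2) * ε ^ j := by
        field_simp
        ring
    _ ≤ L ^ (j + 2) := mul_le_of_le_one_right (by positivity) (pow_le_one₀ hε.le hε1)

lemma mul_ramp_sq_mul_pow_le {m : ℕ} {R ε r lam x C : ℝ} (hlam : 0 ≤ lam) (hε : 0 < ε)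
    (hr : r ≤ R) (hx : 0 ≤ x) (hxC : x ≤ C) :
    lam * ramp R ε r ^ 2 * x ^ m ≤ lam * C ^ m := by
  have hsq : ramp R ε r ^ 2 ≤ 1 := pow_le_one₀ (ramp_nonneg hε hr) ramp_le_one
  calc lam * ramp R ε r ^ 2 * x ^ m ≤ lam * 1 * x ^ m := by gcongr
    _ ≤ lam * C ^ m := by rw [mul_one]; gcongr

lemma aestronglyMeasurable_rayleigh_integrand {R lam : ℝ} {p q : ℕ} {h a : ℝ → ℝ}
    (hh : ContinuousOn h (Icc 0 R)) (ha : Continuous a) :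
    AEStronglyMeasurable (fun r => deriv a r ^ 2 * h r ^ p + lam * a r ^ 2 * h r ^ q)
      (volume.restrict (Ioc 0 R)) := by
  have hh' : AEStronglyMeasurable h (volume.restrict (Ioc 0 R)) :=
    (hh.mono Ioc_subset_Icc_self).aestronglyMeasurable measurableSet_Ioc
  have hd := (measurable_deriv a).aestronglyMeasurable (μ := volume.restrict (Ioc 0 R))
  exact ((hd.pow 2).mul (hh'.pow _)).add
    ((aestronglyMeasurable_const.mul (ha.aestronglyMeasurable.pow 2)).mul (hh'.pow _))

lemma rayleighQ_ramp_le {n : ℕ} {R lam C ε : ℝ} {L : NNReal} {h : ℝ → ℝ} (hn : 3 ≤ n)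
    (hlam : 0 ≤ lam) (hε : 0 < ε) (hεR : ε ≤ R) (hε1 : ε ≤ 1)
    (hh : ∀ r ∈ Icc 0 R, 0 ≤ h r) (hC : ∀ r ∈ Icc 0 R, h r ≤ C)
    (hL : LipschitzOnWith L h (Icc 0 R)) (hhR : h R = 0) :
    rayleighQ R n lam h (ramp R ε) ≤
      (lam * C ^ (n - 3) * R + L ^ (n - 1) * ε) / h 0 ^ (n - 1) := by
  have hR : 0 ≤ R := hε.le.trans hεR
  have hpot : ∀ r ∈ Icc 0 R, lam * ramp R ε r ^ 2 * h r ^ (n - 3) ≤ lam * C ^ (n - 3) :=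
    fun r hr => mul_ramp_sq_mul_pow_le hlam hε hr.2 (hh r hr) (hC r hr)
  have hkin : ∀ r ∈ Ioo (R - ε) R, (-ε⁻¹) ^ 2 * h r ^ (n - 1) ≤ L ^ (n - 1) := by
    intro r hr
    have hrmem : r ∈ Icc 0 R := ⟨by linarith [hr.1], hr.2.le⟩
    have hhr : h r ≤ L * ε := calc
      h r ≤ L * (R - r) := hL.le_mul_sub_of_eq_zero hrmem ⟨hR, le_rfl⟩ hhR hr.2.le
      _ ≤ L * ε := by gcongr; linarith [hr.1]
    rw [neg_sq]
    exact inv_sq_mul_pow_le (by omega) hε hε1 L.2 (hh r hrmem) hhr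
  rw [rayleighQ_eq_of_three_le hn, ramp_zero hε hεR, one_pow, one_mul]
  refine div_le_div_of_nonneg_right ?_ (pow_nonneg (hh 0 ⟨le_rfl, hR⟩) _)
  calc _ ≤ lam * C ^ (n - 3) * (R - ε - 0) +
        (L ^ (n - 1) + lam * C ^ (n - 3)) * (R - (R - ε)) := by
        refine integral_le_of_le_on_Ioo_of_le_on_Ioo (by linarith) (by linarith)
          (aestronglyMeasurable_rayleigh_integrand hL.continuousOn
            (lipschitzWith_ramp hε).continuous) ?_ ?_ ?_
        · intro r hr
          have := hh r (Ioo_subset_Icc_self hr)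
          positivity
        · intro r hr
          rw [deriv_ramp_of_lt hε hr.2, zero_pow two_ne_zero, zero_mul, zero_add]
          exact hpot r ⟨hr.1.le, by linarith [hr.2]⟩
        · intro r hr
          rw [deriv_ramp_of_gt hε hr.1]
          exact add_le_add (hkin r hr) (hpot r ⟨by linarith [hr.1], hr.2.le⟩)
    _ = lam * C ^ (n - 3) * R + L ^ (n - 1) * ε := by ring

theorem stmt_15_general (n : ℕ) (hn : 3 ≤ n) (R : ℝ) (hR : 0 < R) (h : ℝ → ℝ)
    (hH : SatisfiesH R h) (k : ℕ) (C2 : ℝ)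
    (hub : ∀ r ∈ Set.Icc (0:ℝ) R, h r ≤ C2) :
    steklov R n k h ≤ sphereEig n k * C2 ^ (n - 3) * R / (h 0) ^ (n - 1) := by
  obtain ⟨hsmooth, hpos, hhR, -, -⟩ := hH
  have hh : ∀ r ∈ Icc 0 R, 0 ≤ h r := fun r hr =>
    hr.2.lt_or_eq.elim (fun hlt => (hpos r ⟨hr.1, hlt⟩).le) (fun heq => (heq ▸ hhR).ge)
  obtain ⟨L, hL⟩ := hsmooth.exists_lipschitzOnWith (by simp) (convex_Icc 0 R) isCompact_Icc
  set A := sphereEig n k * C2 ^ (n - 3) * R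
  have hbound : ∀ ε ∈ Ioc 0 (min R 1),
      steklov R n k h ≤ (A + L ^ (n - 1) * ε) / h 0 ^ (n - 1) :=
    fun ε hε => (steklov_le_rayleighQ hR.le (by omega) hh
      (isAdmissible_ramp hε.1 (hε.2.trans (min_le_left _ _)))).trans
      (rayleighQ_ramp_le hn (sphereEig_nonneg (by omega) k) hε.1 (hε.2.trans (min_le_left _ _))
        (hε.2.trans (min_le_right _ _)) hh hub hL hhR)
  have hlim : Tendsto (fun ε => (A + L ^ (n - 1) * ε) / h 0 ^ (n - 1)) (𝓝[>] 0)
      (𝓝 (A / h 0 ^ (n - 1))) := by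
    have : Continuous fun ε : ℝ => (A + L ^ (n - 1) * ε) / h 0 ^ (n - 1) := by fun_prop
    simpa using (this.tendsto 0).mono_left nhdsWithin_le_nhds
  exact ge_of_tendsto hlim (Filter.mem_of_superset (Ioc_mem_nhdsGT (lt_min hR one_pos)) hbound)

theorem stmt_15 (n : ℕ) (hn : 3 ≤ n) (R : ℝ) (hR : 0 < R) (h : ℝ → ℝ)
    (hH : SatisfiesH R h) (k : ℕ) (hk : 1 ≤ k) (C2 : ℝ) (hC2 : 0 < C2)
    (hub : ∀ r ∈ Set.Icc (0:ℝ) R, h r ≤ C2) :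
    steklov R n k h ≤ sphereEig n k * C2 ^ (n - 3) * R / (h 0) ^ (n - 1) :=
  stmt_15_general n hn R hR h hH k C2 hub
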